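/- arXiv:2012.00237 — 6 statements merged into one kernel-verified Lean document; each statement's English description precedes it below -/
import Mathlib

section
/- If X is a topological space without isolated points and A ⊆ X is a homological Z₀-set (i.e., A is closed and the singular homology group H₀(U, U \ A) is trivial for every open U ⊆ X), then A is nowhere dense in X. -/
open CategoryTheory AlgebraicTopology Limits

/-- The singular chain complex of a topological space, with `ℤ` coefficients. -/
noncomputable def singularChains (X : Type) [TopologicalSpace X] :
    ChainComplex AddCommGrpCat ℕ :=
  (alternatingFaceMapComplex AddCommGrpCat).obj
    (TopCat.toSSet.obj (TopCat.of X) ⋙ AddCommGrpCat.free)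

/-- The chain map induced by a continuous map. -/
noncomputable def singularChainsMap {X Y : Type} [TopologicalSpace X] [TopologicalSpace Y]
    (f : C(X, Y)) : singularChains X ⟶ singularChains Y :=
  (alternatingFaceMapComplex AddCommGrpCat).map
    (Functor.whiskerRight (TopCat.toSSet.map (TopCat.ofHom f : TopCat.of X ⟶ TopCat.of Y)) AddCommGrpCat.free)

/-- The relative singular homology `H_k(W, V)` of a pair `(W, V)` with `V ⊆ W`,
defined as the homology of the cokernel of the map of singular chain complexes
induced by the inclusion. -/
noncomputable def relativeSingularHomology (W : Type) [TopologicalSpace W] (V : Set W)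
    (k : ℕ) : AddCommGrpCat :=
  (cokernel (singularChainsMap ⟨(Subtype.val : V → W), continuous_subtype_val⟩)).homology k

/-- `A` is a homological `Z_n`-set in `X`: `A` is closed and `H_k(U, U \ A) = 0`
for every open `U ⊆ X` and every `k ≤ n`. -/
def IsHomologicalZSet (X : Type) [TopologicalSpace X] (n : ℕ) (A : Set X) : Prop :=
  IsClosed A ∧ ∀ U : Set X, IsOpen U → ∀ k ≤ n,
    IsZero (relativeSingularHomology U {x : U | (x : X) ∉ A} k)

/-!
If `A` is closed with nonempty interior `U`, then `U \ A = ∅`, so `H₀(U, U \ A) = H₀(U)`.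
This group is nonzero: the augmentation `C₀(U) → ℤ` sending every singular `0`-simplex to `1`
kills boundaries, so it factors through `H₀(U)`, and it is onto as soon as `U` is nonempty.
-/

instance TopCat.isEmpty_toSSet_obj (V : Type) [TopologicalSpace V] [IsEmpty V]
    (n : SimplexCategoryᵒᵖ) : IsEmpty ((TopCat.toSSet.obj (TopCat.of V)).obj n) :=
  ⟨fun σ => isEmptyElim (TopCat.toSSetObjEquiv _ n σ (Classical.arbitrary _))⟩

lemma singularChainsMap_eq_zero_of_isEmpty {V W : Type} [TopologicalSpace V] [IsEmpty V]
    [TopologicalSpace W] (f : C(V, W)) : singularChainsMap f = 0 := by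
  ext n : 1
  have : Subsingleton ((singularChains V).X n) :=
    inferInstanceAs <| Subsingleton <| FreeAbelianGroup <|
      (TopCat.toSSet.obj (TopCat.of V)).obj (Opposite.op (SimplexCategory.mk n))
  exact (AddCommGrpCat.isZero_of_subsingleton _).eq_of_src _ _

noncomputable def relativeSingularHomologyIsoOfIsEmpty (W : Type) [TopologicalSpace W]
    (V : Set W) [IsEmpty V] (k : ℕ) :
    relativeSingularHomology W V k ≅ (singularChains W).homology k :=
  (HomologicalComplex.homologyFunctor _ _ k).mapIso
    (cokernelIsoOfEq (singularChainsMap_eq_zero_of_isEmpty _) ≪≫ cokernelZeroIsoTarget)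

noncomputable def singularChainsAugmentation (U : Type) [TopologicalSpace U] :
    (singularChains U).X 0 ⟶ AddCommGrpCat.of ℤ :=
  AddCommGrpCat.ofHom (FreeAbelianGroup.lift fun _ => (1 : ℤ))

lemma AddCommGrpCat.free_map_comp_lift_one {α β : Type} (g : α ⟶ β) :
    AddCommGrpCat.free.map g ≫ AddCommGrpCat.ofHom (FreeAbelianGroup.lift fun _ : β => (1 : ℤ)) =
      AddCommGrpCat.ofHom (FreeAbelianGroup.lift fun _ : α => (1 : ℤ)) := by
  refine AddCommGrpCat.hom_ext (FreeAbelianGroup.lift_ext _ _ fun x => ?_)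
  change FreeAbelianGroup.lift (fun _ : β => (1 : ℤ)) (FreeAbelianGroup.map _ (.of x)) =
    FreeAbelianGroup.lift (fun _ : α => (1 : ℤ)) (.of x)
  simp

lemma singularChains_d_comp_augmentation (U : Type) [TopologicalSpace U] :
    (singularChains U).d 1 0 ≫ singularChainsAugmentation U = 0 := by
  have hd : (singularChains U).d 1 0 =
      AlternatingFaceMapComplex.objD (TopCat.toSSet.obj (TopCat.of U) ⋙ AddCommGrpCat.free) 0 :=
    alternatingFaceMapComplex_obj_d _ 0
  rw [hd]
  dsimp only [AlternatingFaceMapComplex.objD, SimplicialObject.δ]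
  rw [Fin.sum_univ_two]
  simp only [Fin.val_zero, pow_zero, one_smul, Fin.val_one, pow_one, neg_smul]
  -- the boundary of a `1`-simplex is the difference of its two endpoints
  erw [Preadditive.add_comp, Preadditive.neg_comp, AddCommGrpCat.free_map_comp_lift_one,
    AddCommGrpCat.free_map_comp_lift_one, add_neg_cancel]

lemma not_isZero_singularChains_homology_zero (U : Type) [TopologicalSpace U] [Nonempty U] :
    ¬ IsZero ((singularChains U).homology 0) := by
  intro hzero
  have hopcycles : IsZero ((singularChains U).opcycles 0) :=
    hzero.of_iso (ChainComplex.isoHomologyι₀ _).symm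
  have hfactor := (singularChains U).p_descOpcycles (singularChainsAugmentation U) 1 (by simp)
    (singularChains_d_comp_augmentation U)
  rw [hopcycles.eq_of_src (HomologicalComplex.descOpcycles _ _ _ _ _) 0, comp_zero] at hfactor
  let σ : (TopCat.toSSet.obj (TopCat.of U)).obj (Opposite.op (SimplexCategory.mk 0)) :=
    (TopCat.toSSetObjEquiv _ _).symm (ContinuousMap.const _ (Classical.arbitrary U))
  have hσ : singularChainsAugmentation U (FreeAbelianGroup.of σ) = (1 : ℤ) :=
    FreeAbelianGroup.lift_apply_of _ _
  rw [← hfactor] at hσ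
  exact zero_ne_one hσ

theorem IsHomologicalZSet.isNowhereDense {X : Type} [TopologicalSpace X] {n : ℕ} {A : Set X}
    (hA : IsHomologicalZSet X n A) : IsNowhereDense A := by
  obtain ⟨hclosed, hvanish⟩ := hA
  rw [IsNowhereDense, hclosed.closure_eq, ← Set.not_nonempty_iff_eq_empty]
  rintro ⟨x, hx⟩
  have : IsEmpty {y : interior A | (y : X) ∉ A} :=
    ⟨fun ⟨⟨_, hy⟩, hyA⟩ => hyA (interior_subset hy)⟩
  have : Nonempty (interior A) := ⟨⟨x, hx⟩⟩
  exact not_isZero_singularChains_homology_zero (interior A)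
    ((hvanish _ isOpen_interior 0 (Nat.zero_le n)).of_iso
      (relativeSingularHomologyIsoOfIsEmpty _ _ 0).symm)

theorem stmt_0_general (X : Type) [TopologicalSpace X]
    (A : Set X) (hA : IsHomologicalZSet X 0 A) :
    IsNowhereDense A :=
  hA.isNowhereDense

/-- If `X` has no isolated points and `A` is a homological `Z₀`-set in `X`
(i.e. `A` is closed and `H₀(U, U \\ A) = 0` for every open `U ⊆ X`), then `A` is
nowhere dense in `X`. -/
theorem stmt_0 (X : Type) [TopologicalSpace X]
    (h_no_isolated : ∀ x : X, ¬ IsOpen ({x} : Set X))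
    (A : Set X) (hA : IsHomologicalZSet X 0 A) :
    IsNowhereDense A :=
  stmt_0_general X A hA
end

section
/- If A and B are homological Zₙ-sets in a topological space X, then their union A ∪ B is a homological Zₙ-set in X. -/
open CategoryTheory AlgebraicTopology Limits

/-! For `Z ⊆ Y ⊆ W`, the short exact sequence of relative singular chain complexes
`0 → C_•(Y, Z) → C_•(W, Z) → C_•(W, Y) → 0` shows that `H_k(W, Z)` vanishes as soon as `H_k(Y, Z)`
and `H_k(W, Y)` do. Apply this to `U \ (A ∪ B) ⊆ U \ A ⊆ U`: `H_k(U, U \ A) = 0` because `A` is a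
`Zₙ`-set, and `H_k(U \ A, (U \ A) \ B) = 0` because `B` is a `Zₙ`-set and `U \ A` is open. -/

section CokernelComp

variable {C : Type*} [Category C] [Abelian C] {X Y Z : C} (f : X ⟶ Y) (g : Y ⟶ Z)

noncomputable abbrev cokernelCompShortComplex : ShortComplex C :=
  ShortComplex.mk (cokernel.map f (f ≫ g) (𝟙 X) g (by simp))
    (cokernel.desc (f ≫ g) (cokernel.π g) (by simp)) (by ext; simp)

lemma cokernelCompShortComplex_shortExact [Mono g] :
    (cokernelCompShortComplex f g).ShortExact where
  exact := by
    refine ShortComplex.exact_of_g_is_cokernel _ <|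
      CokernelCofork.IsColimit.ofπ _ _
        (fun φ hφ => cokernel.desc g (cokernel.π (f ≫ g) ≫ φ) ?_)
        (fun φ hφ => ?_) (fun φ hφ ψ hψ => ?_)
    · simpa using cokernel.π f ≫= hφ
    · exact coequalizer.hom_ext (by simp)
    · exact coequalizer.hom_ext (by simp [← hψ])
  mono_f := Abelian.mono_cokernel_map_of_isPullback
    (IsPullback.of_vert_isIso_mono (fst := f) (snd := 𝟙 X) (f := g) (g := f ≫ g) ⟨by simp⟩)
  epi_g := epi_of_epi_fac (cokernel.π_desc _ _ _)

end CokernelComp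

lemma HomologicalComplex.isZero_homology_cokernel_comp {C ι : Type*} [Category C] [Abelian C]
    {c : ComplexShape ι} {K L M : HomologicalComplex C c} (f : K ⟶ L) (g : L ⟶ M) [Mono g]
    (i : ι) (hf : IsZero ((cokernel f).homology i)) (hg : IsZero ((cokernel g).homology i)) :
    IsZero ((cokernel (f ≫ g)).homology i) :=
  ((cokernelCompShortComplex_shortExact f g).homology_exact₂ i).isZero_X₂
    (hf.eq_of_src _ _) (hg.eq_of_tgt _ _)

noncomputable abbrev singularChainsFunctor : TopCat ⥤ ChainComplex AddCommGrpCat ℕ :=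
  TopCat.toSSet ⋙ (Functor.whiskeringRight _ _ _).obj AddCommGrpCat.free ⋙
    alternatingFaceMapComplex AddCommGrpCat

section SingularChains

variable {X Y Z : Type} [TopologicalSpace X] [TopologicalSpace Y] [TopologicalSpace Z]

lemma singularChainsMap_comp (f : C(X, Y)) (g : C(Y, Z)) :
    singularChainsMap (g.comp f) = singularChainsMap f ≫ singularChainsMap g :=
  singularChainsFunctor.map_comp (TopCat.ofHom f) (TopCat.ofHom g)

lemma mono_singularChainsMap {f : C(X, Y)} (hf : Function.Injective f) :
    Mono (singularChainsMap f) :=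
  have : Mono (TopCat.ofHom f) := (TopCat.mono_iff_injective _).2 hf
  singularChainsFunctor.map_mono (TopCat.ofHom f)

noncomputable def homologyCokernelSingularChainsMapIso {X' Y' : Type}
    [TopologicalSpace X'] [TopologicalSpace Y'] (f : C(X, Y)) (f' : C(X', Y'))
    (e₁ : X ≃ₜ X') (e₂ : Y ≃ₜ Y') (h : ∀ x, e₂ (f x) = f' (e₁ x)) (k : ℕ) :
    (cokernel (singularChainsMap f)).homology k ≅ (cokernel (singularChainsMap f')).homology k :=
  (HomologicalComplex.homologyFunctor _ _ k).mapIso <|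
    cokernel.mapIso _ _ (singularChainsFunctor.mapIso (TopCat.isoOfHomeo e₁))
      (singularChainsFunctor.mapIso (TopCat.isoOfHomeo e₂)) <| by
        change singularChainsMap f ≫ singularChainsMap (e₂ : C(Y, Y')) =
          singularChainsMap (e₁ : C(X, X')) ≫ singularChainsMap f'
        rw [← singularChainsMap_comp, ← singularChainsMap_comp]
        exact congrArg _ (ContinuousMap.ext h)

end SingularChains

noncomputable def relativeSingularHomologyIsoOfHomeomorph {W W' : Type} [TopologicalSpace W]
    [TopologicalSpace W'] (e : W ≃ₜ W') {V : Set W} {V' : Set W'} (h : ∀ w, w ∈ V ↔ e w ∈ V')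
    (k : ℕ) : relativeSingularHomology W V k ≅ relativeSingularHomology W' V' k :=
  homologyCokernelSingularChainsMapIso _ _ (e.subtype h) e (fun _ => rfl) k

lemma isZero_relativeSingularHomology_of_triple {W : Type} [TopologicalSpace W] {Y Z : Set W}
    (hZY : Z ⊆ Y) {k : ℕ} (hWY : IsZero (relativeSingularHomology W Y k))
    (hYZ : IsZero (relativeSingularHomology Y {y : Y | (y : W) ∈ Z} k)) :
    IsZero (relativeSingularHomology W Z k) := by
  have := mono_singularChainsMap (f := ⟨(Subtype.val : Y → W), continuous_subtype_val⟩)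
    Subtype.val_injective
  let i : C(Z, Y) := ⟨Set.inclusion hZY, continuous_inclusion hZY⟩
  let e₁ : Z ≃ₜ {y : Y | (y : W) ∈ Z} := (Topology.IsEmbedding.inclusion hZY).toHomeomorph.trans
    (Homeomorph.setCongr (Set.range_inclusion hZY))
  have hfac : singularChainsMap ⟨(Subtype.val : Z → W), continuous_subtype_val⟩ =
      singularChainsMap i ≫ singularChainsMap ⟨(Subtype.val : Y → W), continuous_subtype_val⟩ :=
    singularChainsMap_comp i ⟨Subtype.val, continuous_subtype_val⟩
  simp only [relativeSingularHomology, hfac]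
  refine HomologicalComplex.isZero_homology_cokernel_comp _ _ k ?_ hWY
  exact hYZ.of_iso (homologyCokernelSingularChainsMapIso _ _ e₁ (.refl Y) (fun _ => rfl) k)

def Homeomorph.subtypeSubtypeEquivSubtypeInter {X : Type*} [TopologicalSpace X] (p q : X → Prop) :
    {x : Subtype p // q x.1} ≃ₜ {x // p x ∧ q x} where
  toEquiv := Equiv.subtypeSubtypeEquivSubtypeInter p q
  continuous_toFun := (continuous_subtype_val.comp continuous_subtype_val).subtype_mk _
  continuous_invFun := (continuous_subtype_val.subtype_mk _).subtype_mk _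

/-- The union of two homological `Zₙ`-sets in `X` is a homological `Zₙ`-set in `X`. -/
theorem stmt_1 (X : Type) [TopologicalSpace X] (n : ℕ) (A B : Set X)
    (hA : IsHomologicalZSet X n A) (hB : IsHomologicalZSet X n B) :
    IsHomologicalZSet X n (A ∪ B) := by
  refine ⟨hA.1.union hB.1, fun U hU k hk => ?_⟩
  refine isZero_relativeSingularHomology_of_triple (Y := {x : U | (x : X) ∉ A})
    (fun x (hx : (x : X) ∉ A ∪ B) hxA => hx (.inl hxA)) (hA.2 U hU k hk) ?_
  refine (hB.2 (U ∩ Aᶜ) (hU.inter hA.1.isOpen_compl) k hk).of_iso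
    (relativeSingularHomologyIsoOfHomeomorph
      (Homeomorph.subtypeSubtypeEquivSubtypeInter (· ∈ U) (· ∉ A)) (fun x => ?_) k)
  show ¬((x : X) ∈ A ∨ (x : X) ∈ B) ↔ (x : X) ∉ B
  exact not_or.trans (and_iff_right x.2)
end

section
/- Let Z be a paracompact space and Y a completely metrizable space. Then the space C(Z, Y) of continuous maps with the source limitation (fine) topology is a Baire space. -/
/-- The source limitation (fine) topology on `C(Z, Y)` for a metric space `Y`:
the topology generated by the variable-radius balls
`Λ(h, η) = { h' | ∀ z, dist (h z) (h' z) < η z }`, where `η` ranges over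
continuous positive functions on `Z`. -/
def fineTopology (Z Y : Type) [TopologicalSpace Z] [MetricSpace Y] :
    TopologicalSpace C(Z, Y) :=
  TopologicalSpace.generateFrom
    {S | ∃ (h : C(Z, Y)) (η : C(Z, ℝ)), (∀ z, 0 < η z) ∧
      S = {h' : C(Z, Y) | ∀ z : Z, dist (h z) (h' z) < η z}}

/-!
The variable-radius balls `fineBall h η` form a base of the fine topology. Given dense open sets
`f n` and a nonempty open `U`, choose inductively closed balls with
`fineClosedBall (g (n+1)) (η (n+1)) ⊆ fineClosedBall (g n) (η n) ∩ f n`, nested pointwise in the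
strong form `dist (g n z) (g (n+1) z) + η (n+1) z ≤ η n z`, and with `η n ≤ 2⁻ⁿ`. The centres
then converge uniformly (as `Y` is complete), so their limit is continuous and lies in every ball.
-/

open Filter Topology TopologicalSpace

section Nested

variable {Y : Type*} [MetricSpace Y]

theorem dist_le_sub_of_nested {x : ℕ → Y} {r : ℕ → ℝ}
    (hnest : ∀ n, dist (x n) (x (n + 1)) + r (n + 1) ≤ r n) {n m : ℕ} (hnm : n ≤ m) :
    dist (x n) (x m) ≤ r n - r m := by
  induction m, hnm using Nat.le_induction with
  | base => simp
  | succ m _ ih =>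
    calc dist (x n) (x (m + 1)) ≤ dist (x n) (x m) + dist (x m) (x (m + 1)) :=
          dist_triangle _ _ _
      _ ≤ r n - r (m + 1) := by linarith [hnest m]

theorem exists_tendsto_dist_le_of_nested [CompleteSpace Y] {x : ℕ → Y} {r : ℕ → ℝ}
    (hnest : ∀ n, dist (x n) (x (n + 1)) + r (n + 1) ≤ r n) (hr : Tendsto r atTop (𝓝 0)) :
    ∃ y, Tendsto x atTop (𝓝 y) ∧ ∀ n, dist (x n) y ≤ r n := by
  have hanti : Antitone r :=
    antitone_nat_of_succ_le fun n => by linarith [hnest n, dist_nonneg (x := x n) (y := x (n + 1))]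
  have hr0 : ∀ n, 0 ≤ r n := hanti.le_of_tendsto hr
  have hdist : ∀ n m, n ≤ m → dist (x n) (x m) ≤ r n := fun n m hnm =>
    (dist_le_sub_of_nested hnest hnm).trans (sub_le_self _ (hr0 m))
  obtain ⟨y, hy⟩ := cauchySeq_tendsto_of_complete (cauchySeq_of_le_tendsto_0' r hdist hr)
  refine ⟨y, hy, fun n => le_of_tendsto (tendsto_const_nhds.dist hy) ?_⟩
  filter_upwards [eventually_ge_atTop n] with m hm using hdist n m hm

end Nested

variable {Z Y : Type} [TopologicalSpace Z] [MetricSpace Y]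

def fineBall (h : C(Z, Y)) (η : C(Z, ℝ)) : Set C(Z, Y) := {h' | ∀ z, dist (h z) (h' z) < η z}

def fineClosedBall (h : C(Z, Y)) (η : C(Z, ℝ)) : Set C(Z, Y) := {h' | ∀ z, dist (h z) (h' z) ≤ η z}

theorem exists_fineBall_subset_of_mem {h x : C(Z, Y)} {θ : C(Z, ℝ)} (hx : x ∈ fineBall h θ) :
    ∃ η : C(Z, ℝ), (∀ z, 0 < η z) ∧ fineBall x η ⊆ fineBall h θ :=
  ⟨⟨fun z => θ z - dist (h z) (x z), by fun_prop⟩, fun z => sub_pos.2 (hx z),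
    fun h' hh' z => by
      have := hh' z
      simp only [ContinuousMap.coe_mk] at this
      linarith [dist_triangle (h z) (x z) (h' z)]⟩

theorem isTopologicalBasis_fineBall :
    @IsTopologicalBasis C(Z, Y) (fineTopology Z Y)
      {S | ∃ (h : C(Z, Y)) (η : C(Z, ℝ)), (∀ z, 0 < η z) ∧ S = fineBall h η} := by
  let := fineTopology Z Y
  refine ⟨?_, ?_, rfl⟩
  · rintro _ ⟨h₁, θ₁, -, rfl⟩ _ ⟨h₂, θ₂, -, rfl⟩ x ⟨hx₁, hx₂⟩
    obtain ⟨η₁, hη₁, hsub₁⟩ := exists_fineBall_subset_of_mem hx₁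
    obtain ⟨η₂, hη₂, hsub₂⟩ := exists_fineBall_subset_of_mem hx₂
    refine ⟨fineBall x (η₁ ⊓ η₂), ⟨x, η₁ ⊓ η₂, fun z => lt_min (hη₁ z) (hη₂ z), rfl⟩,
      fun z => by simpa using ⟨hη₁ z, hη₂ z⟩, fun h' hh' => ⟨hsub₁ fun z => ?_, hsub₂ fun z => ?_⟩⟩
    · exact (hh' z).trans_le (min_le_left _ _)
    · exact (hh' z).trans_le (min_le_right _ _)
  · exact Set.eq_univ_of_forall fun h =>
      ⟨fineBall h 1, ⟨h, 1, fun _ => one_pos, rfl⟩, fun z => by simp⟩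

theorem exists_fineBall_subset {U : Set C(Z, Y)} (hU : IsOpen[fineTopology Z Y] U)
    {g : C(Z, Y)} (hg : g ∈ U) : ∃ η : C(Z, ℝ), (∀ z, 0 < η z) ∧ fineBall g η ⊆ U := by
  let := fineTopology Z Y
  obtain ⟨_, ⟨h, θ, -, rfl⟩, hg, hsub⟩ := (isTopologicalBasis_fineBall.isOpen_iff.1 hU) g hg
  obtain ⟨η, hη, hsub'⟩ := exists_fineBall_subset_of_mem hg
  exact ⟨η, hη, hsub'.trans hsub⟩

theorem exists_mem_fineClosedBall_of_nested [CompleteSpace Y] {g : ℕ → C(Z, Y)}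
    {r : ℕ → C(Z, ℝ)} {ε : ℕ → ℝ}
    (hnest : ∀ n z, dist (g n z) (g (n + 1) z) + r (n + 1) z ≤ r n z)
    (hr0 : ∀ n z, 0 ≤ r n z) (hrε : ∀ n z, r n z ≤ ε n) (hε : Tendsto ε atTop (𝓝 0)) :
    ∃ l : C(Z, Y), ∀ n, l ∈ fineClosedBall (g n) (r n) := by
  have hr : ∀ z, Tendsto (r · z) atTop (𝓝 0) := fun z =>
    squeeze_zero (fun n => hr0 n z) (fun n => hrε n z) hε
  choose l hl hdist using fun z => exists_tendsto_dist_le_of_nested (hnest · z) (hr z)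
  have hunif : TendstoUniformly (fun n z => g n z) l atTop := by
    refine Metric.tendstoUniformly_iff.2 fun δ hδ => ?_
    filter_upwards [hε.eventually (gt_mem_nhds hδ)] with n hn z
    rw [dist_comm]
    exact ((hdist z n).trans (hrε n z)).trans_lt hn
  exact ⟨⟨l, hunif.continuous (Frequently.of_forall fun n => (g n).continuous)⟩,
    fun n z => hdist z n⟩

theorem exists_fineClosedBall_subset {U : Set C(Z, Y)} (hU : IsOpen[fineTopology Z Y] U)
    {g : C(Z, Y)} (hg : g ∈ U) (ρ : C(Z, ℝ)) (hρ : ∀ z, 0 < ρ z) :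
    ∃ η : C(Z, ℝ), (∀ z, 0 < η z) ∧ (∀ z, η z ≤ ρ z) ∧ fineClosedBall g η ⊆ U := by
  obtain ⟨θ, hθ, hsub⟩ := exists_fineBall_subset hU hg
  refine ⟨⟨fun z => min (θ z / 2) (ρ z), by fun_prop⟩, fun z => lt_min (half_pos (hθ z)) (hρ z),
    fun z => min_le_right _ _, fun h hh => hsub fun z => ?_⟩
  calc dist (g z) (h z) ≤ min (θ z / 2) (ρ z) := hh z
    _ ≤ θ z / 2 := min_le_left _ _
    _ < θ z := half_lt_self (hθ z)

theorem exists_nested_fineClosedBall_subset {f : Set C(Z, Y)} (hfo : IsOpen[fineTopology Z Y] f)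
    (hfd : @Dense _ (fineTopology Z Y) f) (g : C(Z, Y)) (η : C(Z, ℝ)) (hη : ∀ z, 0 < η z) {ε : ℝ}
    (hε : 0 < ε) :
    ∃ (g' : C(Z, Y)) (η' : C(Z, ℝ)), (∀ z, 0 < η' z) ∧
      (∀ z, dist (g z) (g' z) + η' z ≤ η z) ∧ (∀ z, η' z ≤ ε) ∧ fineClosedBall g' η' ⊆ f := by
  let := fineTopology Z Y
  obtain ⟨g', hg'η, hg'f⟩ := dense_iff_inter_open.1 hfd (fineBall g η)
    (isTopologicalBasis_fineBall.isOpen ⟨g, η, hη, rfl⟩) ⟨g, fun z => by simpa using hη z⟩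
  obtain ⟨η', hη', hle, hsub⟩ := exists_fineClosedBall_subset hfo hg'f
    ⟨fun z => min (η z - dist (g z) (g' z)) ε, by fun_prop⟩
    fun z => lt_min (sub_pos.2 (hg'η z)) hε
  refine ⟨g', η', hη', fun z => ?_, fun z => (hle z).trans (min_le_right _ _), hsub⟩
  linarith [(hle z).trans (min_le_left _ _)]

theorem stmt_6_general (Z Y : Type) [TopologicalSpace Z]
    [MetricSpace Y] [CompleteSpace Y] :
    @BaireSpace C(Z, Y) (fineTopology Z Y) := by
  let := fineTopology Z Y
  refine ⟨fun f hfo hfd => dense_iff_inter_open.2 fun U hU ⟨g₀, hg₀⟩ => ?_⟩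
  obtain ⟨η₀, hη₀, hη₀_le, hU⟩ := exists_fineClosedBall_subset hU hg₀ 1 fun _ => one_pos
  let Ball := {p : C(Z, Y) × C(Z, ℝ) // ∀ z, 0 < p.2 z}
  have step (n : ℕ) (p : Ball) :
      ∃ q : Ball, (∀ z, dist (p.1.1 z) (q.1.1 z) + q.1.2 z ≤ p.1.2 z) ∧
        (∀ z, q.1.2 z ≤ (1 / 2) ^ (n + 1)) ∧ fineClosedBall q.1.1 q.1.2 ⊆ f n :=
    let ⟨g', η', hη', h⟩ :=
      exists_nested_fineClosedBall_subset (hfo n) (hfd n) p.1.1 p.1.2 p.2 (by positivity)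
    ⟨⟨(g', η'), hη'⟩, h⟩
  choose next hnest hsmall hf using step
  let s (n : ℕ) : Ball := Nat.rec ⟨(g₀, η₀), hη₀⟩ next n
  have hradius : ∀ n z, (s n).1.2 z ≤ (1 / 2 : ℝ) ^ n := by
    rintro (_ | n) z
    exacts [(hη₀_le z).trans_eq (pow_zero _).symm, hsmall n (s n) z]
  obtain ⟨l, hl⟩ := exists_mem_fineClosedBall_of_nested (fun n => hnest n (s n))
    (fun n z => ((s n).2 z).le) hradius
    (tendsto_pow_atTop_nhds_zero_of_lt_one (by norm_num) (by norm_num))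
  exact ⟨l, hU (hl 0), Set.mem_iInter.2 fun n => hf n (s n) (hl (n + 1))⟩

/-- If `Z` is paracompact and `Y` is a completely metrizable space, then `C(Z, Y)`
with the source limitation (fine) topology is a Baire space. -/
theorem stmt_6 (Z Y : Type) [TopologicalSpace Z] [ParacompactSpace Z]
    [MetricSpace Y] [CompleteSpace Y] :
    @BaireSpace C(Z, Y) (fineTopology Z Y) :=
  stmt_6_general Z Y
end

section
/- Let Y be a paracompact space, A ⊆ Y closed, and K a compact subset of a normed space V. For every continuous h : Y → V, continuous η : Y → (0,∞), and every continuous g : A → V satisfying ‖g(a) − h(a)‖ < η(a)/2 for all a ∈ A, with g and h taking values in a fixed closed convex subset Q of V, there exists a continuous extension g̃ : Y → Q of g with ‖g̃(y) − h(y)‖ ≤ η(y)/2 for all y ∈ Y. (Proved via the Michael selection theorem applied to the lower semicontinuous convex-valued map Φ(y) = closed ball of radius η(y)/2 around h(y) intersected with Q for y ∉ A, and Φ(y) = {g(y)} for y ∈ A.) -/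
/-!
The constraint `Q ∩ closedBall (h y) (η y / 2)` is convex and closed, contains `h y`, and, since
`‖g a - h a‖ < η a / 2` is strict, contains `g a` for all `y` near `a ∈ A`. For such constraints,
Michael's iteration: a partition of unity glues the constant `g a` near each point `a` of `A`
with a given global selection away from `A`, giving a continuous selection within any `δ > 0`
of `g` on `A`. Intersecting the constraint with a ball of radius `2ε` around the previous map
and halving `ε` at each step yields a uniformly Cauchy sequence of selections; its limit is
continuous, still a selection because the constraint sets are closed, and equals `g` on `A`.
-/

open Set Filter Topology Metric

theorem exists_seq_forall_of_exists_succ {α : Type*} {P : ℕ → α → Prop}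
    {R : ℕ → α → α → Prop} (h₀ : ∃ x, P 0 x) (hsucc : ∀ n x, P n x → ∃ y, P (n + 1) y ∧ R n x y) :
    ∃ w : ℕ → α, ∀ n, P n (w n) ∧ R n (w n) (w (n + 1)) := by
  obtain ⟨x₀, hx₀⟩ := h₀
  choose f hfP hfR using hsucc
  let W : ∀ n, {x // P n x} := fun n => Nat.rec ⟨x₀, hx₀⟩ (fun n x => ⟨f n x x.2, hfP n x x.2⟩) n
  exact ⟨fun n => (W n).1, fun n => ⟨(W n).2, hfR n _ (W n).2⟩⟩

theorem exists_tendstoUniformly_of_dist_le_geometric {Y X : Type*} [PseudoMetricSpace X]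
    [CompleteSpace X] (w : ℕ → Y → X) {C r : ℝ} (hr₀ : 0 ≤ r) (hr : r < 1)
    (hw : ∀ n y, dist (w n y) (w (n + 1) y) ≤ C * r ^ n) :
    ∃ L : Y → X, TendstoUniformly w L atTop := by
  choose L hL using fun y =>
    cauchySeq_tendsto_of_complete (cauchySeq_of_le_geometric r C hr (hw · y))
  have hbound : Tendsto (fun n => C * r ^ n / (1 - r)) atTop (𝓝 0) := by
    simpa using ((tendsto_pow_atTop_nhds_zero_of_lt_one hr₀ hr).const_mul C).div_const (1 - r)
  refine ⟨L, Metric.tendstoUniformly_iff.2 fun ε hε => ?_⟩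
  filter_upwards [hbound.eventually (gt_mem_nhds hε)] with n hn y
  rw [dist_comm]
  exact (dist_le_of_le_geometric_of_tendsto r C hr (hw · y) (hL y) n).trans_lt hn

theorem ContinuousMap.eventually_forall_dist_le {Y X : Type*} [TopologicalSpace Y]
    [PseudoMetricSpace X] {A : Set Y} (g : C(A, X)) {x : Y} (hx : x ∈ A) {δ : ℝ}
    (hδ : 0 < δ) : ∀ᶠ y in 𝓝 x, ∀ hy : y ∈ A, dist (g ⟨y, hy⟩) (g ⟨x, hx⟩) ≤ δ := by
  obtain ⟨U, hU, hUg⟩ := (mem_nhds_subtype A ⟨x, hx⟩ _).1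
    (g.continuous.continuousAt.preimage_mem_nhds (closedBall_mem_nhds (g ⟨x, hx⟩) hδ))
  filter_upwards [hU] with y hy hyA
  exact hUg (show (⟨y, hyA⟩ : A).1 ∈ U from hy)

section Extension

variable {Y V : Type*} [TopologicalSpace Y] [ParacompactSpace Y] [T2Space Y]
  [NormedAddCommGroup V] [NormedSpace ℝ V] {A : Set Y}

theorem exists_continuous_forall_mem_dist_le (hA : IsClosed A) {T : Y → Set V}
    (hT : ∀ y, Convex ℝ (T y)) (u : C(Y, V)) (hu : ∀ y, u y ∈ T y) (g : C(A, V))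
    (hg : ∀ a : A, ∀ᶠ y in 𝓝 (a : Y), g a ∈ T y) {δ : ℝ} (hδ : 0 < δ) :
    ∃ v : C(Y, V), (∀ y, v y ∈ T y) ∧ ∀ a : A, dist (v a) (g a) ≤ δ := by
  obtain ⟨v, hv⟩ := exists_continuous_forall_mem_convex_of_local
    (t := fun y => T y ∩ ⋂ hy : y ∈ A, closedBall (g ⟨y, hy⟩) δ)
    (fun y => (hT y).inter (convex_iInter fun _ => convex_closedBall _ _)) fun x => by
      by_cases hx : x ∈ A
      · refine ⟨_, (hg ⟨x, hx⟩).and (g.eventually_forall_dist_le hx hδ), fun _ => g ⟨x, hx⟩,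
          continuousOn_const, fun y hy => ⟨hy.1, mem_iInter.2 fun hyA => ?_⟩⟩
        rw [mem_closedBall, dist_comm]
        exact hy.2 hyA
      · exact ⟨Aᶜ, hA.isOpen_compl.mem_nhds hx, u, u.continuous.continuousOn,
          fun y hy => ⟨hu y, mem_iInter.2 fun hyA => absurd hyA hy⟩⟩
  exact ⟨v, fun y => (hv y).1, fun a => mem_iInter.1 (hv a).2 a.2⟩

theorem exists_continuous_forall_mem_dist_le_half (hA : IsClosed A) {S : Y → Set V}
    (hS : ∀ y, Convex ℝ (S y)) (g : C(A, V)) (hg : ∀ a : A, ∀ᶠ y in 𝓝 (a : Y), g a ∈ S y)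
    (u : C(Y, V)) (hu : ∀ y, u y ∈ S y) {ε : ℝ} (hε : 0 < ε)
    (hug : ∀ a : A, dist (u a) (g a) ≤ ε) :
    ∃ v : C(Y, V), (∀ y, v y ∈ S y) ∧ (∀ a : A, dist (v a) (g a) ≤ ε / 2) ∧
      ∀ y, dist (u y) (v y) ≤ 2 * ε := by
  have hg_near_u : ∀ a : A, ∀ᶠ y in 𝓝 (a : Y), g a ∈ closedBall (u y) (2 * ε) := fun a => by
    have hlt : dist (g a) (u a) < 2 * ε := by
      rw [dist_comm]
      linarith [hug a]
    filter_upwards [(isOpen_lt (continuous_const.dist u.continuous) continuous_const).mem_nhds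
      hlt] with y hy using le_of_lt hy
  obtain ⟨v, hv, hvg⟩ := exists_continuous_forall_mem_dist_le hA
    (fun y => (hS y).inter (convex_closedBall (u y) (2 * ε))) u
    (fun y => ⟨hu y, mem_closedBall_self (by positivity)⟩) g
    (fun a => (hg a).and (hg_near_u a)) (half_pos hε)
  exact ⟨v, fun y => (hv y).1, hvg, fun y => by simpa [dist_comm] using (hv y).2⟩

theorem exists_continuous_extension_forall_mem [CompleteSpace V] (hA : IsClosed A)
    {S : Y → Set V} (hS : ∀ y, Convex ℝ (S y)) (hS_closed : ∀ y, IsClosed (S y))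
    (u : C(Y, V)) (hu : ∀ y, u y ∈ S y) (g : C(A, V))
    (hg : ∀ a : A, ∀ᶠ y in 𝓝 (a : Y), g a ∈ S y) :
    ∃ G : C(Y, V), (∀ y, G y ∈ S y) ∧ ∀ a : A, G a = g a := by
  obtain ⟨w, hw⟩ := exists_seq_forall_of_exists_succ
    (P := fun (n : ℕ) (v : C(Y, V)) => (∀ y, v y ∈ S y) ∧ ∀ a : A, dist (v a) (g a) ≤ (1 / 2) ^ n)
    (R := fun n v v' => ∀ y, dist (v y) (v' y) ≤ 2 * (1 / 2) ^ n)
    (by simpa using exists_continuous_forall_mem_dist_le hA hS u hu g hg one_pos)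
    fun n v hv => by
      obtain ⟨v', hv'S, hv'g, hvv'⟩ := exists_continuous_forall_mem_dist_le_half hA hS g hg v
        hv.1 (by positivity) hv.2
      exact ⟨v', ⟨hv'S, fun a => (hv'g a).trans_eq (by ring)⟩, hvv'⟩
  obtain ⟨L, hL⟩ := exists_tendstoUniformly_of_dist_le_geometric (fun n y => w n y)
    (by norm_num) (by norm_num) fun n y => (hw n).2 y
  refine ⟨⟨L, hL.continuous (Frequently.of_forall fun n => (w n).continuous)⟩,
    fun y => (hS_closed y).mem_of_tendsto (hL.tendsto_at y) (Eventually.of_forall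
      fun n => (hw n).1.1 y), fun a => tendsto_nhds_unique (hL.tendsto_at a) ?_⟩
  exact tendsto_iff_dist_tendsto_zero.2 <| squeeze_zero (fun _ => dist_nonneg)
    (fun n => (hw n).1.2 a) (tendsto_pow_atTop_nhds_zero_of_lt_one (by norm_num) (by norm_num))

end Extension

theorem stmt_7_general (Y V : Type) [TopologicalSpace Y] [ParacompactSpace Y] [T2Space Y]
    [NormedAddCommGroup V] [NormedSpace ℝ V] [CompleteSpace V]
    (A : Set Y) (hA : IsClosed A)
    (Q : Set V) (hQ_closed : IsClosed Q) (hQ_conv : Convex ℝ Q)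
    (h : C(Y, V)) (hhQ : ∀ y : Y, h y ∈ Q)
    (η : C(Y, ℝ)) (hη : ∀ y : Y, 0 < η y)
    (g : C(A, V)) (hgQ : ∀ a : A, g a ∈ Q)
    (hgh : ∀ a : A, ‖g a - h a‖ < η a / 2) :
    ∃ gt : C(Y, V), (∀ y : Y, gt y ∈ Q) ∧ (∀ a : A, gt a = g a) ∧
      ∀ y : Y, ‖gt y - h y‖ ≤ η y / 2 := by
  have hg_near_h : ∀ a : A, ∀ᶠ y in 𝓝 (a : Y), g a ∈ Q ∩ closedBall (h y) (η y / 2) :=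
    fun a => by
      have hlt : dist (g a) (h a) < η a / 2 := by rw [dist_eq_norm]; exact hgh a
      filter_upwards [(isOpen_lt (continuous_const.dist h.continuous)
        (η.continuous.div_const 2)).mem_nhds hlt] with y hy using ⟨hgQ a, le_of_lt hy⟩
  obtain ⟨G, hG, hGg⟩ := exists_continuous_extension_forall_mem hA
    (fun y => hQ_conv.inter (convex_closedBall (h y) (η y / 2)))
    (fun y => hQ_closed.inter isClosed_closedBall) h
    (fun y => ⟨hhQ y, mem_closedBall_self (half_pos (hη y)).le⟩) g hg_near_h
  exact ⟨G, fun y => (hG y).1, hGg, fun y => by simpa [dist_eq_norm] using (hG y).2⟩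

/-- Extension with control, via Michael's selection theorem.  Let `Y` be a paracompact
(Hausdorff) space, `A ⊆ Y` closed, `K` a compact subset of a Banach space `V`, and
`Q ⊆ V` a nonempty closed convex subset.  For every continuous `h : Y → V`, continuous
`η : Y → (0, ∞)`, and continuous `g : A → V` with `‖g a - h a‖ < η a / 2` for all
`a ∈ A`, where `g` and `h` take values in `Q`, there is a continuous extension
`g̃ : Y → Q` of `g` with `‖g̃ y - h y‖ ≤ η y / 2` for all `y ∈ Y`. -/
theorem stmt_7 (Y V : Type) [TopologicalSpace Y] [ParacompactSpace Y] [T2Space Y]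
    [NormedAddCommGroup V] [NormedSpace ℝ V] [CompleteSpace V]
    (A : Set Y) (hA : IsClosed A)
    (K : Set V) (hK : IsCompact K)
    (Q : Set V) (hQ_closed : IsClosed Q) (hQ_conv : Convex ℝ Q) (hQ_ne : Q.Nonempty)
    (h : C(Y, V)) (hhQ : ∀ y : Y, h y ∈ Q)
    (η : C(Y, ℝ)) (hη : ∀ y : Y, 0 < η y)
    (g : C(A, V)) (hgQ : ∀ a : A, g a ∈ Q)
    (hgh : ∀ a : A, ‖g a - h a‖ < η a / 2) :
    ∃ gt : C(Y, V), (∀ y : Y, gt y ∈ Q) ∧ (∀ a : A, gt a = g a) ∧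
      ∀ y : Y, ‖gt y - h y‖ ≤ η y / 2 :=
  stmt_7_general Y V A hA Q hQ_closed hQ_conv h hhQ η hη g hgQ hgh
end

section
/- Let Y be a compact metric space, let K = Y × {1} ⊔ Y × {2} be the disjoint union of two copies of Y, and let Q be the Hilbert cube. Then the set G of continuous maps h : K → Q with h(Y × {1}) ∩ h(Y × {2}) = ∅ is open and dense in C(K, Q) with the compact-open (equivalently uniform) topology. -/
/-- Let `K = Y ⊔ Y` be the disjoint union of two copies of a compact metric space `Y`
and let `Q = [0,1]^ℕ` be the Hilbert cube.  Then the set `G` of continuous maps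
`h : K → Q` whose images of the two copies are disjoint is open and dense in
`C(K, Q)` with the compact-open topology. -/
theorem stmt_9 (Y : Type) [MetricSpace Y] [CompactSpace Y]
    (G : Set C(Y ⊕ Y, ℕ → unitInterval))
    (hG : G = {h : C(Y ⊕ Y, ℕ → unitInterval) |
      Disjoint (h '' (Set.range Sum.inl)) (h '' (Set.range Sum.inr))}) :
    IsOpen G ∧ Dense G := by
  subst hG
  have hK₁ : IsCompact (Set.range (Sum.inl : Y → Y ⊕ Y)) :=
    isCompact_range continuous_inl
  have hK₂ : IsCompact (Set.range (Sum.inr : Y → Y ⊕ Y)) :=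
    isCompact_range continuous_inr
  constructor
  · -- openness
    rw [isOpen_iff_forall_mem_open]
    intro h hh
    obtain ⟨U, V, hU, hV, hsU, hsV, hUV⟩ :=
      SeparatedNhds.of_isCompact_isCompact (hK₁.image h.continuous)
        (hK₂.image h.continuous) hh
    refine ⟨{f : C(Y ⊕ Y, ℕ → unitInterval) | Set.MapsTo f (Set.range Sum.inl) U} ∩
        {f | Set.MapsTo f (Set.range Sum.inr) V}, ?_, ?_, ?_, ?_⟩
    · rintro f ⟨hf1, hf2⟩
      exact Set.disjoint_of_subset hf1.image_subset hf2.image_subset hUV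
    · exact (ContinuousMap.isOpen_setOf_mapsTo hK₁ hU).inter
        (ContinuousMap.isOpen_setOf_mapsTo hK₂ hV)
    · exact Set.mapsTo_iff_image_subset.mpr hsU
    · exact Set.mapsTo_iff_image_subset.mpr hsV
  · -- density
    intro h
    -- the separator function
    set s : Y ⊕ Y → unitInterval := Sum.elim (fun _ => 0) (fun _ => 1) with hs
    have hscont : Continuous s := Continuous.sumElim continuous_const continuous_const
    -- perturbations of `h`
    set F : ℕ → C(Y ⊕ Y, ℕ → unitInterval) := fun n =>
      ⟨fun x i => if i = n then s x else h x i, by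
        refine continuous_pi fun i => ?_
        by_cases hi : i = n
        · simpa [hi] using hscont
        · simp only [hi, if_false]; exact (continuous_apply i).comp h.continuous⟩ with hF
    have hmem : ∀ n, F n ∈ {h : C(Y ⊕ Y, ℕ → unitInterval) |
        Disjoint (h '' (Set.range Sum.inl)) (h '' (Set.range Sum.inr))} := by
      intro n
      simp only [Set.mem_setOf_eq]
      rw [Set.disjoint_left]
      rintro q ⟨a, ⟨y, rfl⟩, rfl⟩ ⟨b, ⟨z, rfl⟩, hq⟩
      have := congrFun hq n
      simp only [hF, ContinuousMap.coe_mk, if_pos rfl, hs, Sum.elim_inl, Sum.elim_inr] at this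
      exact absurd (congrArg Subtype.val this) (by norm_num)
    have htend : Filter.Tendsto F Filter.atTop (nhds h) := by
      rw [ContinuousMap.tendsto_iff_tendstoUniformly, tendstoUniformly_iff_tendsto,
        Pi.uniformity, Filter.tendsto_iInf]
      intro i
      rw [Filter.tendsto_comap_iff, Filter.tendsto_def]
      intro u hu
      have hev : ∀ᶠ q : ℕ × (Y ⊕ Y) in Filter.atTop ×ˢ ⊤, i < q.1 :=
        (Filter.eventually_gt_atTop i).prod_inl ⊤
      filter_upwards [hev] with q hq
      have : F q.1 q.2 i = h q.2 i := by
        simp [hF, Nat.ne_of_lt hq]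
      simpa [this] using refl_mem_uniformity hu
    exact mem_closure_of_tendsto htend (Filter.Eventually.of_forall hmem)
end

section
/- Every finite-dimensional (covering dimension n < ∞) compact metric space X is a C-space: for every sequence (𝒰_k) of open covers of X there exist pairwise disjoint open families 𝒱_k, each refining 𝒰_k, with ⋃_k 𝒱_k a cover of X. -/
/-- `X` is a C-space: for every sequence `𝒰 k` of open covers of `X` there is a sequence
`𝒱 k` of pairwise disjoint families of open sets, each `𝒱 k` refining `𝒰 k`, whose
union `⋃ k, 𝒱 k` covers `X`. -/
def IsCSpace (X : Type) [TopologicalSpace X] : Prop :=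
  ∀ 𝒰 : ℕ → Set (Set X),
    (∀ k, (∀ u ∈ 𝒰 k, IsOpen u) ∧ ⋃₀ 𝒰 k = Set.univ) →
    ∃ 𝒱 : ℕ → Set (Set X),
      (∀ k, (∀ v ∈ 𝒱 k, IsOpen v) ∧
        ((𝒱 k).Pairwise fun v w => Disjoint v w) ∧
        (∀ v ∈ 𝒱 k, ∃ u ∈ 𝒰 k, v ⊆ u)) ∧
      ⋃ k, ⋃₀ 𝒱 k = Set.univ

/-- Covering dimension `≤ n`: every open cover has an open refinement of order `≤ n + 1`
(i.e. every point belongs to at most `n + 1` members of the refinement). -/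
def CoveringDimLE (X : Type) [TopologicalSpace X] (n : ℕ) : Prop :=
  ∀ (ι : Type) (U : ι → Set X), (∀ i, IsOpen (U i)) → (⋃ i, U i) = Set.univ →
    ∃ (κ : Type) (V : κ → Set X),
      (∀ j, IsOpen (V j)) ∧ (⋃ j, V j) = Set.univ ∧
      (∀ j, ∃ i, V j ⊆ U i) ∧
      ∀ x : X, {j : κ | x ∈ V j}.encard ≤ (n : ℕ∞) + 1

/-- Every finite-dimensional compact metric space is a C-space. -/
theorem stmt_16 (X : Type) [MetricSpace X] [CompactSpace X] (n : ℕ)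
    (hdim : CoveringDimLE X n) : IsCSpace X := by
  classical
  intro 𝒰 h𝒰
  -- combined cover indexed by choices of one member from each of the first n+1 covers
  set ι := ∀ k : Fin (n+1), {u : Set X // u ∈ 𝒰 k} with hι
  set U : ι → Set X := fun g => ⋂ k, (g k).1 with hUdef
  have hUopen : ∀ g : ι, IsOpen (U g) := fun g =>
    isOpen_iInter_of_finite fun k => (h𝒰 k).1 _ (g k).2
  have hUcov : (⋃ g, U g) = Set.univ := by
    apply Set.eq_univ_of_forall
    intro x
    have hx : ∀ k : Fin (n+1), ∃ u : {u : Set X // u ∈ 𝒰 k}, x ∈ u.1 := by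
      intro k
      have hx' : x ∈ ⋃₀ 𝒰 k := by rw [(h𝒰 k).2]; trivial
      obtain ⟨u, hu, hxu⟩ := hx'
      exact ⟨⟨u, hu⟩, hxu⟩
    choose g hg using hx
    exact Set.mem_iUnion.2 ⟨g, Set.mem_iInter.2 hg⟩
  obtain ⟨κ, V, hVopen, hVcov, hVref, hVord⟩ := hdim ι U hUopen hUcov
  -- finite subcover
  obtain ⟨t, ht⟩ := isCompact_univ.elim_finite_subcover V hVopen (by rw [hVcov])
  have hcovt : (Set.univ : Set X) ⊆ ⋃ i : ↥t, V i := by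
    intro x hx
    obtain ⟨i, hi, hxi⟩ := Set.mem_iUnion₂.1 (ht hx)
    exact Set.mem_iUnion.2 ⟨⟨i, hi⟩, hxi⟩
  -- partition of unity
  obtain ⟨f, hf⟩ := PartitionOfUnity.exists_isSubordinate (s := (Set.univ : Set X))
    isClosed_univ (fun i : ↥t => V i) (fun i => hVopen i) hcovt
  set W : Finset ↥t → Set X :=
    fun S => {x | ∀ i ∈ S, 0 < f i x ∧ ∀ i', i' ∉ S → f i' x < f i x} with hWdef
  have hWopen : ∀ S : Finset ↥t, IsOpen (W S) := by
    intro S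
    have : W S = ⋂ i ∈ S, ({x | 0 < f i x} ∩ ⋂ i' ∈ Sᶜ, {x | f i' x < f i x}) := by
      ext x
      simp only [hWdef, Set.mem_setOf_eq, Set.mem_iInter, Set.mem_inter_iff,
        Finset.mem_compl]
    rw [this]
    refine isOpen_biInter_finset fun i _ => ?_
    refine ((isOpen_lt continuous_const (f i).continuous)).inter ?_
    exact isOpen_biInter_finset fun i' _ =>
      isOpen_lt (f i').continuous (f i).continuous
  -- each W S is contained in V i for i ∈ S
  have hWV : ∀ S : Finset ↥t, ∀ i ∈ S, W S ⊆ V i := by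
    intro S i hi x hx
    have h1 : 0 < f i x := (hx i hi).1
    exact hf i (subset_tsupport _ (by simpa [Function.mem_support] using h1.ne'))
  refine ⟨fun k => if k ≤ n then {w | ∃ S : Finset ↥t, S.card = k + 1 ∧ w = W S} else ∅,
    ?_, ?_⟩
  · intro k
    by_cases hk : k ≤ n
    · simp only [if_pos hk]
      refine ⟨?_, ?_, ?_⟩
      · rintro v ⟨S, -, rfl⟩; exact hWopen S
      · rintro v ⟨S, hScard, rfl⟩ w ⟨T, hTcard, rfl⟩ hne
        have hST : S ≠ T := by rintro rfl; exact hne rfl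
        have h1 : ¬ S ⊆ T := fun h => hST (Finset.eq_of_subset_of_card_le h (le_of_eq (hTcard.trans hScard.symm)))
        have h2 : ¬ T ⊆ S := fun h => hST ((Finset.eq_of_subset_of_card_le h (le_of_eq (hScard.trans hTcard.symm))).symm)
        obtain ⟨i, hiS, hiT⟩ := Finset.not_subset.1 h1
        obtain ⟨j, hjT, hjS⟩ := Finset.not_subset.1 h2
        rw [Set.disjoint_left]
        intro x hxS hxT
        have ha : f j x < f i x := (hxS i hiS).2 j hjS
        have hb : f i x < f j x := (hxT j hjT).2 i hiT
        exact absurd (ha.trans hb) (lt_irrefl _)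
      · rintro v ⟨S, hScard, rfl⟩
        have hS : S.Nonempty := Finset.card_pos.1 (by omega)
        obtain ⟨i, hi⟩ := hS
        obtain ⟨g, hg⟩ := hVref i
        have hkn : (⟨k, by omega⟩ : Fin (n+1)) = ⟨k, by omega⟩ := rfl
        refine ⟨(g ⟨k, by omega⟩).1, (g ⟨k, by omega⟩).2, ?_⟩
        exact (hWV S i hi).trans (hg.trans (Set.iInter_subset _ _))
    · simp [if_neg hk]
  · apply Set.eq_univ_of_forall
    intro x
    set S : Finset ↥t := Finset.univ.filter (fun i => 0 < f i x) with hSdef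
    -- S is nonempty
    have hsum : ∑ᶠ i, f i x = 1 := f.sum_eq_one (Set.mem_univ x)
    have hSne : S.Nonempty := by
      by_contra h
      have hzero : ∀ i : ↥t, f i x = 0 := by
        intro i
        by_contra hz
        have : 0 < f i x := lt_of_le_of_ne (f.nonneg i x) (Ne.symm hz)
        exact h ⟨i, by simp [hSdef, this]⟩
      rw [finsum_eq_sum_of_fintype] at hsum
      simp [hzero] at hsum
    -- S has at most n+1 elements
    have hcard : S.card ≤ n + 1 := by
      have himg : ((S.image (fun i : ↥t => (i : κ))) : Set κ) ⊆ {j : κ | x ∈ V j} := by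
        intro j hj
        simp only [Finset.coe_image, Set.mem_image, Finset.mem_coe] at hj
        obtain ⟨i, hi, rfl⟩ := hj
        have : 0 < f i x := by simpa [hSdef] using hi
        exact hf i (subset_tsupport _ (by simpa [Function.mem_support] using this.ne'))
      have h1 : ((S.image (fun i : ↥t => (i : κ))) : Set κ).encard ≤ (n : ℕ∞) + 1 :=
        le_trans (Set.encard_mono himg) (hVord x)
      have h2 : (S.image (fun i : ↥t => (i : κ))).card = S.card :=
        Finset.card_image_of_injective _ Subtype.coe_injective
      rw [Set.encard_coe_eq_coe_finsetCard, h2] at h1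
      rw [show ((n : ℕ∞) + 1) = ((n + 1 : ℕ) : ℕ∞) by exact_mod_cast rfl] at h1
      exact_mod_cast h1
    have hScard : S.card = (S.card - 1) + 1 := by
      have := hSne.card_pos; omega
    have hxW : x ∈ W S := by
      intro i hi
      refine ⟨by simpa [hSdef] using hi, fun i' hi' => ?_⟩
      have h0 : f i' x = 0 := by
        by_contra hz
        exact hi' (by simp [hSdef, lt_of_le_of_ne (f.nonneg i' x) (Ne.symm hz)])
      rw [h0]
      simpa [hSdef] using hi
    refine Set.mem_iUnion.2 ⟨S.card - 1, ?_⟩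
    have hkle : S.card - 1 ≤ n := by omega
    refine ⟨W S, ?_, hxW⟩
    simp only [if_pos hkle]
    exact ⟨S, hScard, rfl⟩
end
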